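/- The scalar factor of the eight-vertex R-matrix satisfies the second inversion relation R₀(u)·R₀(u+1) = −[u+1]/[u], for every u ∈ ℂ for which [u]≠0 and none of the infinite-product factors appearing in the denominators of R₀(u) and R₀(u+1) vanishes. -/

import Mathlib

open scoped BigOperators
open Complex

noncomputable section

namespace EV

/-- The infinite `q`-Pochhammer symbol `(z; q)_∞ = ∏_{n ≥ 0} (1 - z qⁿ)`. -/
def qpoch (z q : ℂ) : ℂ := ∏' n : ℕ, (1 - z * q ^ n)

/-- The double infinite product `(z; q₁, q₂)_∞`. -/
def qpoch2 (z q1 q2 : ℂ) : ℂ := ∏' nm : ℕ × ℕ, (1 - z * q1 ^ nm.1 * q2 ^ nm.2)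

/-- `Θ_q(z) = (z;q)_∞ (q/z;q)_∞ (q;q)_∞`. -/
def jtheta (q z : ℂ) : ℂ := qpoch z q * qpoch (q / z) q * qpoch q q

/-- `x ^ w := exp (w · log x)` for real `x` and complex exponent `w`. -/
def xpow (x : ℝ) (w : ℂ) : ℂ := Complex.exp (w * (Real.log x : ℂ))

/-- `[u] = x^{u²/r - u} Θ_{x^{2r}}(x^{2u})`. -/
def brk (x r : ℝ) (u : ℂ) : ℂ :=
  xpow x (u ^ 2 / (r : ℂ) - u) * jtheta (xpow x (2 * (r : ℂ))) (xpow x (2 * u))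

/-- The scalar factor `R₀(u)` of the eight-vertex `R`-matrix. -/
def R0 (x r : ℝ) (u : ℂ) : ℂ :=
  xpow x (-(2 * u) * ((r : ℂ) - 1) / (2 * (r : ℂ))) *
    (qpoch2 (xpow x (2 * (r : ℂ)) * xpow x 2 * xpow x (2 * u)) (xpow x 4) (xpow x (2 * (r : ℂ))) *
     qpoch2 (xpow x 2 * xpow x (2 * u)) (xpow x 4) (xpow x (2 * (r : ℂ))) *
     qpoch2 (xpow x (2 * (r : ℂ)) / xpow x (2 * u)) (xpow x 4) (xpow x (2 * (r : ℂ))) *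
     qpoch2 (xpow x 4 / xpow x (2 * u)) (xpow x 4) (xpow x (2 * (r : ℂ)))) /
    (qpoch2 (xpow x (2 * (r : ℂ)) * xpow x 2 / xpow x (2 * u)) (xpow x 4) (xpow x (2 * (r : ℂ))) *
     qpoch2 (xpow x 2 / xpow x (2 * u)) (xpow x 4) (xpow x (2 * (r : ℂ))) *
     qpoch2 (xpow x (2 * (r : ℂ)) * xpow x (2 * u)) (xpow x 4) (xpow x (2 * (r : ℂ))) *
     qpoch2 (xpow x 4 * xpow x (2 * u)) (xpow x 4) (xpow x (2 * (r : ℂ))))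

/-- None of the infinite-product factors in the denominator of `R₀(u)` vanishes. -/
def R0Defined (x r : ℝ) (u : ℂ) : Prop :=
  qpoch2 (xpow x (2 * (r : ℂ)) * xpow x 2 / xpow x (2 * u)) (xpow x 4) (xpow x (2 * (r : ℂ))) ≠ 0 ∧
  qpoch2 (xpow x 2 / xpow x (2 * u)) (xpow x 4) (xpow x (2 * (r : ℂ))) ≠ 0 ∧
  qpoch2 (xpow x (2 * (r : ℂ)) * xpow x (2 * u)) (xpow x 4) (xpow x (2 * (r : ℂ))) ≠ 0 ∧
  qpoch2 (xpow x 4 * xpow x (2 * u)) (xpow x 4) (xpow x (2 * (r : ℂ))) ≠ 0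

/-- `p̃ = e^{2πiτ}`. -/
def ptil (τ : ℂ) : ℂ := Complex.exp (2 * (Real.pi : ℂ) * Complex.I * τ)

/-- `ϑ₁(u|τ)`. -/
def th1 (τ u : ℂ) : ℂ :=
  2 * ptil τ ^ ((1 : ℂ) / 8) * qpoch (ptil τ) (ptil τ) * Complex.sin ((Real.pi : ℂ) * u) *
    ∏' n : ℕ, (1 - 2 * ptil τ ^ (n + 1) * Complex.cos (2 * (Real.pi : ℂ) * u)
                + ptil τ ^ (2 * (n + 1)))

/-- `ϑ₂(u|τ) = ϑ₁(u + 1/2 | τ)`. -/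
def th2 (τ u : ℂ) : ℂ := th1 τ (u + 1 / 2)

/-- `ϑ₀(u|τ)`. -/
def th0 (τ u : ℂ) : ℂ :=
  -Complex.I * Complex.exp ((Real.pi : ℂ) * Complex.I * (u + τ / 4)) * th1 τ (u + τ / 2)

/-- `ϑ₃(u|τ)`. -/
def th3 (τ u : ℂ) : ℂ :=
  Complex.exp ((Real.pi : ℂ) * Complex.I * (u + τ / 4)) * th1 τ (u + (τ + 1) / 2)

def av (r : ℝ) (τ u : ℂ) : ℂ :=
  th2 (τ / 2) (1 / (2 * (r : ℂ))) * th2 (τ / 2) (u / (2 * (r : ℂ))) /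
    (th2 (τ / 2) 0 * th2 (τ / 2) ((1 + u) / (2 * (r : ℂ))))

def bv (r : ℝ) (τ u : ℂ) : ℂ :=
  th2 (τ / 2) (1 / (2 * (r : ℂ))) * th1 (τ / 2) (u / (2 * (r : ℂ))) /
    (th2 (τ / 2) 0 * th1 (τ / 2) ((1 + u) / (2 * (r : ℂ))))

def cv (r : ℝ) (τ u : ℂ) : ℂ :=
  th1 (τ / 2) (1 / (2 * (r : ℂ))) * th2 (τ / 2) (u / (2 * (r : ℂ))) /
    (th2 (τ / 2) 0 * th1 (τ / 2) ((1 + u) / (2 * (r : ℂ))))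

def dv (r : ℝ) (τ u : ℂ) : ℂ :=
  -(th1 (τ / 2) (1 / (2 * (r : ℂ))) * th1 (τ / 2) (u / (2 * (r : ℂ))) /
    (th2 (τ / 2) 0 * th2 (τ / 2) ((1 + u) / (2 * (r : ℂ)))))

/-- The entry `R(u)^{e₁e₂}_{f₁f₂}` of the eight-vertex `R`-matrix, signs in `{1, -1}`. -/
def Rent (x r : ℝ) (τ u : ℂ) (e1 e2 f1 f2 : ℤ) : ℂ :=
  R0 x r u *
    (if e1 = f1 ∧ e2 = f2 then (if e1 = e2 then av r τ u else bv r τ u)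
     else if e1 = f2 ∧ e2 = f1 ∧ e1 ≠ e2 then cv r τ u
     else if e1 = -f1 ∧ e2 = -f2 ∧ e1 = e2 then dv r τ u
     else 0)

/-- All entries of `R(u)` are defined (no vanishing denominator). -/
def REntriesDefined (x r : ℝ) (τ u : ℂ) : Prop :=
  R0Defined x r u ∧ th2 (τ / 2) 0 ≠ 0 ∧
    th1 (τ / 2) ((1 + u) / (2 * (r : ℂ))) ≠ 0 ∧ th2 (τ / 2) ((1 + u) / (2 * (r : ℂ))) ≠ 0

/-- The SOS face weight `W(a,b;c,d|u)`, with `a,b` the top-row and `c,d` the bottom-row heights. -/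
def Wfw (x r : ℝ) (u : ℂ) (a b c d : ℤ) : ℂ :=
  if (b - a) ^ 2 = 1 ∧ (c - a) ^ 2 = 1 ∧ (d - b) ^ 2 = 1 ∧ (d - c) ^ 2 = 1 then
    (if d = a then
      (if b = c then
        R0 x r u * brk x r ((a : ℂ) - ((b - a : ℤ) : ℂ) * u) * brk x r 1 /
          (brk x r (a : ℂ) * brk x r (1 + u))
       else
        R0 x r u * brk x r (b : ℂ) * brk x r u / (brk x r (a : ℂ) * brk x r (1 + u)))
     else R0 x r u)
  else 0

/-- The intertwining vector component `ψ_ε(u)^a_b` (`ε = ±1`). -/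
def psiv (x r : ℝ) (τ : ℂ) (ε : ℤ) (u : ℂ) (a b : ℤ) : ℂ :=
  if ε = 1 then th0 (τ / 2) ((((a : ℂ) - (b : ℂ)) * u + (a : ℂ)) / (2 * (r : ℂ)))
  else th3 (τ / 2) ((((a : ℂ) - (b : ℂ)) * u + (a : ℂ)) / (2 * (r : ℂ)))

/-- The constant `C = x^{-r/4} e^{-πi/4} τ^{1/2}`. -/
def Cconst (x r : ℝ) (τ : ℂ) : ℂ :=
  xpow x (-(r : ℂ) / 4) * Complex.exp (-(Real.pi : ℂ) * Complex.I / 4) * τ ^ ((1 : ℂ) / 2)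

/-- The dual intertwining vector component `ψ*_ε(u)^a_b`. -/
def psisv (x r : ℝ) (τ : ℂ) (ε : ℤ) (u : ℂ) (a b : ℤ) : ℂ :=
  -(ε : ℂ) * (((a : ℂ) - (b : ℂ)) / (2 * brk x r (b : ℂ) * brk x r u)) * Cconst x r τ ^ 2 *
    psiv x r τ (-ε) (u - 1) a b

/-- The second intertwining vector component `ψ'_ε(u)^a_b`. -/
def psipv (x r : ℝ) (τ : ℂ) (ε : ℤ) (u : ℂ) (a b : ℤ) : ℂ :=
  brk x r u * brk x r (a : ℂ) / (brk x r (u - 1) * brk x r (b : ℂ)) * psiv x r τ ε (u - 2) a b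

/-- `ψ*_ε(u)^a_b`, set to `0` unless `|a - b| = 1`. -/
def psisg (x r : ℝ) (τ : ℂ) (ε : ℤ) (u : ℂ) (a b : ℤ) : ℂ :=
  if (a - b) ^ 2 = 1 then psisv x r τ ε u a b else 0

def sgnB (s : Bool) : ℤ := if s then 1 else -1

/-- A canonical admissible path of `k` unit steps from `a` to `b` (when `b - a ∈ {-k, -k+2, …, k}`):
first go up, then down. -/
def cpath (k : ℕ) (a b : ℤ) (j : ℕ) : ℤ :=
  if (j : ℤ) ≤ ((k : ℤ) + b - a) / 2 then a + j else a + 2 * (((k : ℤ) + b - a) / 2) - j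

/-- A path from `a` to `b` with prescribed intermediate values. -/
def pathExt (k : ℕ) (a b : ℤ) (f : Fin (k - 1) → ℤ) (j : ℕ) : ℤ :=
  if j = 0 then a else if j = k then b
  else if h : j - 1 < k - 1 then f ⟨j - 1, h⟩ else 0

/-- The fused intertwining vector component along the path `c`. -/
def psiFusedPath (x r : ℝ) (τ : ℂ) (k : ℕ) (ε : ℤ) (u : ℂ) (c : ℕ → ℤ) : ℂ :=
  ∑ s ∈ Finset.univ.filter (fun s : Fin k → Bool => (∑ j, sgnB (s j)) = ε),
    ∏ j : Fin k, psiv x r τ (sgnB (s j)) (u + (k : ℂ) - 1 - (j.val : ℂ)) (c j.val) (c (j.val + 1))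

/-- `ψ^{(k)}_ε(u)^a_b` (using the canonical admissible path from `a` to `b`). -/
def psiFused (x r : ℝ) (τ : ℂ) (k : ℕ) (ε : ℤ) (u : ℂ) (a b : ℤ) : ℂ :=
  psiFusedPath x r τ k ε u (cpath k a b)

/-- The fused dual intertwining vector component for the sign sequence `s`. -/
def psisFusedSeq (x r : ℝ) (τ : ℂ) (k : ℕ) (s : Fin k → Bool) (u : ℂ) (a b : ℤ) : ℂ :=
  ∑' f : Fin (k - 1) → ℤ, ∏ j : Fin k,
    psisg x r τ (sgnB (s j)) (u + (k : ℂ) - 1 - (j.val : ℂ))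
      (pathExt k a b f (j.val + 1)) (pathExt k a b f j.val)

/-- `ψ*^{(k)}_ε(u)^a_b` (using the canonical sign sequence of sum `ε`). -/
def psisFused (x r : ℝ) (τ : ℂ) (k : ℕ) (ε : ℤ) (u : ℂ) (a b : ℤ) : ℂ :=
  psisFusedSeq x r τ k (fun j => decide (j.val < k - ((k : ℤ) - ε).toNat / 2)) u a b

/-- `d ∈ {-k, -k+2, …, k}`. -/
def stepSet (k : ℕ) (d : ℤ) : Prop := d.natAbs ≤ k ∧ (d - k) % 2 = 0

/-- The `k×1` fused face weight `W^{(k,1)}(a,b;d,c|u)`. -/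
def W1k (x r : ℝ) (k : ℕ) (u : ℂ) (a b d c : ℤ) : ℂ :=
  ∑' f : Fin (k - 1) → ℤ, ∏ j : Fin k,
    Wfw x r (u + (k : ℂ) - 1 - (j.val : ℂ)) (cpath k a b j.val) (cpath k a b (j.val + 1))
      (pathExt k d c f j.val) (pathExt k d c f (j.val + 1))

/-- The `k×k` fused face weight `W^{(k,k)}(a,b;d,c|u)`. -/
def Wkk (x r : ℝ) (k : ℕ) (u : ℂ) (a b d c : ℤ) : ℂ :=
  ∑' g : Fin (k - 1) → ℤ, ∏ j : Fin k,
    W1k x r k (u - (k : ℂ) + 1 + (j.val : ℂ)) (pathExt k a d g j.val) (cpath k b c j.val)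
      (pathExt k a d g (j.val + 1)) (cpath k b c (j.val + 1))

/-- The fundamental `L`-matrix `L^{(1)}(m,m';n,n'|u)`. -/
def L1 (x r : ℝ) (u : ℂ) (m m' n n' : ℤ) : ℂ :=
  if (m' - m) ^ 2 = 1 ∧ (n' - n) ^ 2 = 1 then
    (if m' - m = n' - n then
      brk x r (u + ((n' - n : ℤ) : ℂ) * ((n : ℂ) - (m : ℂ)) / 2) *
        brk x r (((n : ℂ) + (m : ℂ)) / 2) / (brk x r u * brk x r (n : ℂ))
     else
      brk x r (u + ((n' - n : ℤ) : ℂ) * ((n : ℂ) + (m : ℂ)) / 2) *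
        brk x r (((n : ℂ) - (m : ℂ)) / 2) / (brk x r u * brk x r (n : ℂ)))
  else 0

/-- The `k`-fused `L`-matrix `L^{(k)}(m₀,m_k;n₀,n_k|u)` (canonical path in the `m`-variables). -/
def Lk (x r : ℝ) (k : ℕ) (u : ℂ) (m0 mk n0 nk : ℤ) : ℂ :=
  ∑' f : Fin (k - 1) → ℤ, ∏ j : Fin k,
    L1 x r (u + (k : ℂ) - 1 - (j.val : ℂ)) (cpath k m0 mk j.val) (cpath k m0 mk (j.val + 1))
      (pathExt k n0 nk f j.val) (pathExt k n0 nk f (j.val + 1))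

/-- The falling product `[A]_M = [A][A-1]⋯[A-M+1]`. -/
def ffall (x r : ℝ) (A : ℂ) (M : ℕ) : ℂ := ∏ i ∈ Finset.range M, brk x r (A - i)

/-- The elliptic binomial coefficient `[A; B]`. -/
def ebinom (x r : ℝ) (A : ℂ) (B : ℕ) : ℂ := ffall x r A B / ffall x r (B : ℂ) B

/-- The rising product `[A, B] = [A][A+1]⋯[B]` (equal to `1` if `B < A`). -/
def rising (x r : ℝ) (A B : ℤ) : ℂ :=
  ∏ i ∈ Finset.range ((B - A + 1).toNat), brk x r ((A : ℂ) + i)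

/-- The real infinite `q`-Pochhammer symbol. -/
def rqpoch (z q : ℝ) : ℝ := ∏' n : ℕ, (1 - z * q ^ n)

/-- The real value of `[a]` for real `a`. -/
def rbrk (x r a : ℝ) : ℝ :=
  x ^ (a ^ 2 / r - a) *
    (rqpoch (x ^ (2 * a)) (x ^ (2 * r)) * rqpoch (x ^ (2 * r) / x ^ (2 * a)) (x ^ (2 * r)) *
      rqpoch (x ^ (2 * r)) (x ^ (2 * r)))

/-- The symbol `(a,b)_M`. -/
def pairSym (x r : ℝ) (a b : ℤ) (M : ℕ) : ℂ :=
  (if 0 ≤ (a - b + (M : ℤ)) / 2 then (ebinom x r ((M : ℤ) : ℂ) (((a - b + (M : ℤ)) / 2).toNat))⁻¹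
   else 0) *
    rising x r ((a + b - (M : ℤ)) / 2) ((a + b + (M : ℤ)) / 2) /
    ((Real.sqrt (rbrk x r (a : ℝ) * rbrk x r (b : ℝ)) : ℝ) : ℂ)


section AuxInversion
open Filter

lemma hasProd_zero_of_zero {ι : Type*} {f : ι → ℂ} (i : ι) (hi : f i = 0) :
    HasProd f 0 := by
  classical
  have h : (fun s : Finset ι => ∏ b ∈ s, f b) =ᶠ[atTop] (fun _ => (0 : ℂ)) := by
    filter_upwards [Filter.eventually_ge_atTop ({i} : Finset ι)] with s hs
    exact Finset.prod_eq_zero (hs (Finset.mem_singleton_self i)) hi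
  exact (tendsto_const_nhds.congr' h.symm : _)

lemma multipliable_one_add {ι : Type*} (g : ι → ℂ) (hg : Summable g) :
    Multipliable (fun i => 1 + g i) := by
  by_cases h : ∀ i, 1 + g i ≠ 0
  · have hlog : Summable (fun i => Complex.log (1 + g i)) := by
      apply Summable.of_norm_bounded_eventually (g := fun i => 3/2 * ‖g i‖) (hg.norm.mul_left _)
      have h2 : ∀ᶠ i in cofinite, ‖g i‖ ≤ 1/2 := by
        have h3 := Metric.tendsto_nhds.mp hg.tendsto_cofinite_zero (1/2) (by norm_num)
        filter_upwards [h3] with i hi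
        simpa [dist_eq_norm] using hi.le
      filter_upwards [h2] with i hi
      exact Complex.norm_log_one_add_half_le_self hi
    exact Complex.multipliable_of_summable_log hlog
  · push_neg at h
    obtain ⟨i, hi⟩ := h
    exact ⟨0, hasProd_zero_of_zero i hi⟩

lemma multipliable_one_sub {ι : Type*} (g : ι → ℂ) (hg : Summable g) :
    Multipliable (fun i => 1 - g i) :=
  (multipliable_one_add (fun i => -g i) hg.neg).congr (fun i => by ring)

lemma qpoch_split (z q : ℂ) (hq : ‖q‖ < 1) : qpoch z q = (1 - z) * qpoch (z * q) q := by
  have hgeo : Summable (fun n : ℕ => q ^ n) := summable_geometric_of_norm_lt_one hq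
  have hm1 : Multipliable (fun n : ℕ => 1 - z * q ^ (n + 1)) := by
    refine (multipliable_one_sub (fun n : ℕ => z * q * q ^ n) (hgeo.mul_left (z * q))).congr
      (fun n => ?_)
    ring
  have h0 := tprod_eq_zero_mul' (f := fun n : ℕ => 1 - z * q ^ n) (by
    refine hm1.congr fun n => rfl)
  unfold qpoch
  rw [h0]
  simp only [pow_zero, mul_one]
  congr 1
  exact tprod_congr fun n => by ring

/-- The set of pairs with first coordinate zero. -/
def zeroRow : Set (ℕ × ℕ) := {nm | nm.1 = 0}

def zeroRowEquiv : ℕ ≃ zeroRow :=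
  { toFun := fun n => ⟨(0, n), rfl⟩
    invFun := fun i => i.1.2
    left_inv := fun n => rfl
    right_inv := fun i => Subtype.ext (Prod.ext (i.2 : i.1.1 = 0).symm rfl) }

def posRowEquiv : ℕ × ℕ ≃ ↥zeroRowᶜ :=
  { toFun := fun nm => ⟨(nm.1 + 1, nm.2), Nat.succ_ne_zero nm.1⟩
    invFun := fun i => (i.1.1 - 1, i.1.2)
    left_inv := fun nm => by simp
    right_inv := fun i =>
      Subtype.ext (Prod.ext (Nat.succ_pred_eq_of_ne_zero (i.2 : ¬i.1.1 = 0)) rfl) }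

@[simp] lemma zeroRowEquiv_apply (n : ℕ) : (zeroRowEquiv n : ℕ × ℕ) = (0, n) := rfl
@[simp] lemma posRowEquiv_apply (nm : ℕ × ℕ) :
    (posRowEquiv nm : ℕ × ℕ) = (nm.1 + 1, nm.2) := rfl

lemma summable_geo2 (c q1 q2 : ℂ) (h1 : ‖q1‖ < 1) (h2 : ‖q2‖ < 1) :
    Summable (fun nm : ℕ × ℕ => c * q1 ^ nm.1 * q2 ^ nm.2) := by
  have := summable_mul_of_summable_norm (f := fun n : ℕ => c * q1 ^ n)
    (g := fun m : ℕ => q2 ^ m) ?_ ?_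
  · exact this
  · simp only [norm_mul, norm_pow]
    exact (summable_geometric_of_lt_one (norm_nonneg q1) h1).mul_left _
  · simp only [norm_pow]
    exact summable_geometric_of_lt_one (norm_nonneg q2) h2

lemma qpoch2_split (c q1 q2 : ℂ) (h1 : ‖q1‖ < 1) (h2 : ‖q2‖ < 1) :
    qpoch2 c q1 q2 = qpoch c q2 * qpoch2 (c * q1) q1 q2 := by
  classical
  have hgs : Summable (fun nm : ℕ × ℕ => c * q1 ^ nm.1 * q2 ^ nm.2) :=
    summable_geo2 c q1 q2 h1 h2
  have hmS : Multipliable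
      ((fun nm : ℕ × ℕ => 1 - c * q1 ^ nm.1 * q2 ^ nm.2) ∘ ((↑) : zeroRow → ℕ × ℕ)) :=
    (multipliable_one_sub _ (hgs.subtype zeroRow)).congr (fun i => rfl)
  have hmSc : Multipliable
      ((fun nm : ℕ × ℕ => 1 - c * q1 ^ nm.1 * q2 ^ nm.2) ∘ ((↑) : ↥zeroRowᶜ → ℕ × ℕ)) :=
    (multipliable_one_sub _ (hgs.subtype zeroRowᶜ)).congr (fun i => rfl)
  have key := Multipliable.tprod_mul_tprod_compl
    (f := fun nm : ℕ × ℕ => 1 - c * q1 ^ nm.1 * q2 ^ nm.2) hmS hmSc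
  have hL : (∏' i : zeroRow, (1 - c * q1 ^ (i : ℕ × ℕ).1 * q2 ^ (i : ℕ × ℕ).2)) =
      qpoch c q2 := by
    rw [← Equiv.tprod_eq zeroRowEquiv
      (fun i : zeroRow => 1 - c * q1 ^ (i : ℕ × ℕ).1 * q2 ^ (i : ℕ × ℕ).2)]
    unfold qpoch
    exact tprod_congr fun n => by simp
  have hR : (∏' i : ↥zeroRowᶜ, (1 - c * q1 ^ (i : ℕ × ℕ).1 * q2 ^ (i : ℕ × ℕ).2)) =
      qpoch2 (c * q1) q1 q2 := by
    rw [← Equiv.tprod_eq posRowEquiv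
      (fun i : ↥zeroRowᶜ => 1 - c * q1 ^ (i : ℕ × ℕ).1 * q2 ^ (i : ℕ × ℕ).2)]
    unfold qpoch2
    refine tprod_congr fun nm => ?_
    simp only [posRowEquiv_apply]
    ring
  conv_lhs => rw [qpoch2]
  rw [← key, hL, hR]


lemma xpow_add (x : ℝ) (a b : ℂ) : xpow x (a + b) = xpow x a * xpow x b := by
  unfold xpow; rw [add_mul, Complex.exp_add]

lemma xpow_sub (x : ℝ) (a b : ℂ) : xpow x (a - b) = xpow x a / xpow x b := by
  unfold xpow; rw [sub_mul, Complex.exp_sub]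

lemma xpow_zero' (x : ℝ) : xpow x 0 = 1 := by unfold xpow; simp

lemma xpow_ne_zero (x : ℝ) (a : ℂ) : xpow x a ≠ 0 := Complex.exp_ne_zero _

lemma xpow_norm_lt_one (x : ℝ) (hx0 : 0 < x) (hx1 : x < 1) (t : ℝ) (ht : 0 < t) :
    ‖xpow x (t : ℂ)‖ < 1 := by
  unfold xpow
  rw [Complex.norm_exp]
  have h1 : ((t : ℂ) * (Real.log x : ℂ)).re = t * Real.log x := by
    rw [← Complex.ofReal_mul]; exact Complex.ofReal_re _
  rw [h1]
  exact Real.exp_lt_one_iff.mpr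
    (mul_neg_of_pos_of_neg ht (Real.log_neg hx0 hx1))

/-- `Aq x r t = (x^t; x⁴, x^{2r})_∞` as a function of the exponent. -/
def Aq (x r : ℝ) (t : ℂ) : ℂ := qpoch2 (xpow x t) (xpow x 4) (xpow x (2 * (r : ℂ)))

/-- `Bq x r t = (x^t; x^{2r})_∞` as a function of the exponent. -/
def Bq (x r : ℝ) (t : ℂ) : ℂ := qpoch (xpow x t) (xpow x (2 * (r : ℂ)))

lemma R0_canon (x r : ℝ) (v : ℂ) :
    R0 x r v = xpow x (-(2 * v) * ((r : ℂ) - 1) / (2 * (r : ℂ))) *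
      (Aq x r (2 * (r : ℂ) + 2 + 2 * v) * Aq x r (2 + 2 * v) * Aq x r (2 * (r : ℂ) - 2 * v) *
        Aq x r (4 - 2 * v)) /
      (Aq x r (2 * (r : ℂ) + 2 - 2 * v) * Aq x r (2 - 2 * v) * Aq x r (2 * (r : ℂ) + 2 * v) *
        Aq x r (4 + 2 * v)) := by
  unfold R0 Aq
  simp only [← xpow_add, ← xpow_sub]

lemma R0Defined_canon (x r : ℝ) (v : ℂ) :
    R0Defined x r v ↔ (Aq x r (2 * (r : ℂ) + 2 - 2 * v) ≠ 0 ∧ Aq x r (2 - 2 * v) ≠ 0 ∧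
      Aq x r (2 * (r : ℂ) + 2 * v) ≠ 0 ∧ Aq x r (4 + 2 * v) ≠ 0) := by
  unfold R0Defined Aq
  simp only [← xpow_add, ← xpow_sub]

lemma brk_canon (x r : ℝ) (v : ℂ) :
    brk x r v = xpow x (v ^ 2 / (r : ℂ) - v) *
      (Bq x r (2 * v) * Bq x r (2 * (r : ℂ) - 2 * v) * Bq x r (2 * (r : ℂ))) := by
  unfold brk jtheta Bq
  simp only [← xpow_sub]

end AuxInversion

set_option maxHeartbeats 1600000 in
/-- the second inversion relation `R₀(u) · R₀(u+1) = -[u+1]/[u]`, valid whenever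
`[u] ≠ 0` and none of the infinite-product factors in the denominators of `R₀(u)` and `R₀(u+1)`
vanishes. -/
theorem R0_second_inversion (x r : ℝ) (hx0 : 0 < x) (hx1 : x < 1) (hr : 1 < r) (u : ℂ)
    (hu : brk x r u ≠ 0) (h1 : R0Defined x r u) (h2 : R0Defined x r (u + 1)) :
    R0 x r u * R0 x r (u + 1) = -(brk x r (u + 1) / brk x r u) := by
  have hrC : (r : ℂ) ≠ 0 := by
    exact_mod_cast (show (r : ℝ) ≠ 0 by linarith)
  have hq4 : ‖xpow x 4‖ < 1 := by
    rw [show (4 : ℂ) = ((4 : ℝ) : ℂ) by norm_num]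
    exact xpow_norm_lt_one x hx0 hx1 4 (by norm_num)
  have hp : ‖xpow x (2 * (r : ℂ))‖ < 1 := by
    rw [show (2 * (r : ℂ)) = (((2 * r : ℝ)) : ℂ) by push_cast; ring]
    exact xpow_norm_lt_one x hx0 hx1 (2 * r) (by linarith)
  have ASp : ∀ t : ℂ, Aq x r t = Bq x r t * Aq x r (t + 4) := by
    intro t
    unfold Aq Bq
    rw [qpoch2_split _ _ _ hq4 hp, ← xpow_add]
  have BSp : ∀ t : ℂ, Bq x r t = (1 - xpow x t) * Bq x r (t + 2 * (r : ℂ)) := by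
    intro t
    unfold Bq
    rw [qpoch_split _ _ hp, ← xpow_add]
  -- canonical splittings
  have S1 : Aq x r (2 + 2 * u) = Bq x r (2 + 2 * u) * Aq x r (2 * u + 6) := by
    rw [ASp (2 + 2 * u), show (2 + 2 * u + 4 : ℂ) = 2 * u + 6 by ring]
  have S2 : Aq x r (2 * (r : ℂ) - 2 * u - 2) =
      Bq x r (2 * (r : ℂ) - 2 * u - 2) * Aq x r (2 * (r : ℂ) + 2 - 2 * u) := by
    rw [ASp (2 * (r : ℂ) - 2 * u - 2),
      show (2 * (r : ℂ) - 2 * u - 2 + 4 : ℂ) = 2 * (r : ℂ) + 2 - 2 * u by ring]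
  have S3 : Aq x r (-(2 * u)) = Bq x r (-(2 * u)) * Aq x r (4 - 2 * u) := by
    rw [ASp (-(2 * u)), show (-(2 * u) + 4 : ℂ) = 4 - 2 * u by ring]
  have S4 : Aq x r (2 * (r : ℂ) + 2 * u) =
      Bq x r (2 * (r : ℂ) + 2 * u) * Aq x r (2 * (r : ℂ) + 4 + 2 * u) := by
    rw [ASp (2 * (r : ℂ) + 2 * u),
      show (2 * (r : ℂ) + 2 * u + 4 : ℂ) = 2 * (r : ℂ) + 4 + 2 * u by ring]
  have S5 : True := trivial
  -- canonical forms of the hypotheses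
  rw [R0Defined_canon] at h1 h2
  obtain ⟨h11, h12, h13, h14⟩ := h1
  obtain ⟨h21, h22, h23, h24⟩ := h2
  rw [show (2 * (r : ℂ) + 2 - 2 * (u + 1) : ℂ) = 2 * (r : ℂ) - 2 * u by ring] at h21
  rw [show (2 - 2 * (u + 1) : ℂ) = -(2 * u) by ring] at h22
  rw [show (2 * (r : ℂ) + 2 * (u + 1) : ℂ) = 2 * (r : ℂ) + 2 + 2 * u by ring] at h23
  rw [show (4 + 2 * (u + 1) : ℂ) = 2 * u + 6 by ring] at h24
  -- canonical forms of R0 and brk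
  have hR0u := R0_canon x r u
  have hR0u1 := R0_canon x r (u + 1)
  rw [show (2 * (r : ℂ) + 2 + 2 * (u + 1) : ℂ) = 2 * (r : ℂ) + 4 + 2 * u by ring,
    show (2 + 2 * (u + 1) : ℂ) = 4 + 2 * u by ring,
    show (2 * (r : ℂ) - 2 * (u + 1) : ℂ) = 2 * (r : ℂ) - 2 * u - 2 by ring,
    show (4 - 2 * (u + 1) : ℂ) = 2 - 2 * u by ring,
    show (2 * (r : ℂ) + 2 - 2 * (u + 1) : ℂ) = 2 * (r : ℂ) - 2 * u by ring,
    show (2 - 2 * (u + 1) : ℂ) = -(2 * u) by ring,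
    show (2 * (r : ℂ) + 2 * (u + 1) : ℂ) = 2 * (r : ℂ) + 2 + 2 * u by ring,
    show (4 + 2 * (u + 1) : ℂ) = 2 * u + 6 by ring] at hR0u1
  have hbrku := brk_canon x r u
  have hbrku1 := brk_canon x r (u + 1)
  rw [show (2 * (u + 1) : ℂ) = 2 + 2 * u by ring,
    show (2 * (r : ℂ) - (2 + 2 * u) : ℂ) = 2 * (r : ℂ) - 2 * u - 2 by ring] at hbrku1
  -- nonvanishing facts
  have hu' : xpow x (u ^ 2 / (r : ℂ) - u) *
      (Bq x r (2 * u) * Bq x r (2 * (r : ℂ) - 2 * u) * Bq x r (2 * (r : ℂ))) ≠ 0 := by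
    rw [← hbrku]; exact hu
  -- xpow identities
  have hprod : xpow x (2 * u) * xpow x (-(2 * u)) = 1 := by
    rw [← xpow_add, show (2 * u + -(2 * u) : ℂ) = 0 by ring, xpow_zero']
  have hw2m : xpow x (-(2 * (u + 1)) * ((r : ℂ) - 1) / (2 * (r : ℂ))) *
      (xpow x (-(2 * u) * ((r : ℂ) - 1) / (2 * (r : ℂ))) * xpow x (2 * u) *
        xpow x (u ^ 2 / (r : ℂ) - u)) = xpow x ((u + 1) ^ 2 / (r : ℂ) - (u + 1)) := by
    simp only [← xpow_add]
    congr 1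
    field_simp
    ring
  obtain ⟨Y, hY⟩ : ∃ Y : ℂ, Y = 1 - xpow x (2 * u) := ⟨_, rfl⟩
  obtain ⟨Z, hZ⟩ : ∃ Z : ℂ, Z = 1 - xpow x (-(2 * u)) := ⟨_, rfl⟩
  have S6' : Bq x r (2 * u) = Y * Bq x r (2 * (r : ℂ) + 2 * u) := by
    rw [BSp (2 * u), show (2 * u + 2 * (r : ℂ) : ℂ) = 2 * (r : ℂ) + 2 * u by ring, ← hY]
  have S5' : Bq x r (-(2 * u)) = Z * Bq x r (2 * (r : ℂ) - 2 * u) := by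
    rw [BSp (-(2 * u)), show (-(2 * u) + 2 * (r : ℂ) : ℂ) = 2 * (r : ℂ) - 2 * u by ring, hZ]
  have hYZ : Y = -(xpow x (2 * u) * Z) := by
    rw [hY, hZ]; linear_combination -hprod
  have hDne : (Aq x r (2 * (r : ℂ) + 2 - 2 * u) * Aq x r (2 - 2 * u) *
      Aq x r (2 * (r : ℂ) + 2 * u) * Aq x r (4 + 2 * u)) *
      (Aq x r (2 * (r : ℂ) - 2 * u) * Aq x r (-(2 * u)) *
      Aq x r (2 * (r : ℂ) + 2 + 2 * u) * Aq x r (2 * u + 6)) ≠ 0 :=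
    mul_ne_zero (mul_ne_zero (mul_ne_zero (mul_ne_zero h11 h12) h13) h14)
      (mul_ne_zero (mul_ne_zero (mul_ne_zero h21 h22) h23) h24)
  -- main computation
  rw [hR0u, hR0u1, hbrku, hbrku1, div_mul_div_comm, ← neg_div, div_eq_div_iff hDne hu',
    S1, S2, S3, S4, S5', S6', hYZ, ← hw2m]
  ring

end EV
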